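/- arXiv:1203.6468 — 7 statements merged into one kernel-verified Lean document; each statement's English description precedes it below -/
import Mathlib

section
/- Let M = (M_k), indexed by nonempty proper subsets k of Ĩ = [n+1, n+m+1], be a BZ datum: it satisfies (BZ-1) for all distinct i, j ∈ Ĩ and k with k ∩ {i,j} = ∅, M_{k∪{i}} + M_{k∪{j}} ≤ M_{k∪{i,j}} + M_k, and (BZ-2) for all i < j < l in Ĩ and k with k ∩ {i,j,l} = ∅, M_{k∪{i,l}} + M_{k∪{j}} = min(M_{k∪{i,j}} + M_{k∪{l}}, M_{k∪{j,l}} + M_{k∪{i}}), with the convention M_∅ = M_Ĩ = 0. Define M* by (M*)_k := M_{Ĩ∖k}. Then M* again satisfies (BZ-1) and (BZ-2). -/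
/-- The extended interval Ĩ = [n+1, n+m+1]. -/
noncomputable def Itilde (n m : ℤ) : Finset ℤ := Finset.Icc (n + 1) (n + m + 1)

/-- The pairing ⟨h_i, k⟩ ∈ {−1,0,1} determined by membership of i, i+1 in k. -/
def pairH (i : ℤ) (k : Finset ℤ) : ℤ :=
  if i ∈ k ∧ i + 1 ∉ k then 1 else if i ∉ k ∧ i + 1 ∈ k then -1 else 0

/-- Edge inequalities (BZ-1). -/
def BZ1 (n m : ℤ) (M : Finset ℤ → ℤ) : Prop :=
  ∀ (i j : ℤ) (k : Finset ℤ), i ∈ Itilde n m → j ∈ Itilde n m → i ≠ j →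
    k ⊆ Itilde n m → i ∉ k → j ∉ k →
    M (insert i k) + M (insert j k) ≤ M (insert i (insert j k)) + M k

/-- Tropical Plücker relations (BZ-2). -/
def BZ2 (n m : ℤ) (M : Finset ℤ → ℤ) : Prop :=
  ∀ (i j l : ℤ) (k : Finset ℤ), i ∈ Itilde n m → j ∈ Itilde n m → l ∈ Itilde n m →
    i < j → j < l → k ⊆ Itilde n m → i ∉ k → j ∉ k → l ∉ k →
    M (insert i (insert l k)) + M (insert j k) =
      min (M (insert i (insert j k)) + M (insert l k))
        (M (insert j (insert l k)) + M (insert i k))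

/-- The e-normalization condition (BZ-0). -/
def eNorm (n m : ℤ) (M : Finset ℤ → ℤ) : Prop :=
  ∀ i ∈ Finset.Icc (n + 1) (n + m), M (Finset.Icc (n + 1) i) = 0

/-- e-BZ datum on the interval I = [n+1, n+m], with the conventions M_∅ = M_Ĩ = 0. -/
def eBZ (n m : ℤ) (M : Finset ℤ → ℤ) : Prop :=
  M ∅ = 0 ∧ M (Itilde n m) = 0 ∧ BZ1 n m M ∧ BZ2 n m M ∧ eNorm n m M

/-- wt^∨(M) paired with a Maya diagram k. -/
noncomputable def wtv (n m : ℤ) (M : Finset ℤ → ℤ) (k : Finset ℤ) : ℤ :=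
  ∑ i ∈ Finset.Icc (n + 1) (n + m), M (Finset.Icc (i + 1) (n + m + 1)) * pairH i k

/-- The sharp operation M ↦ M^♯. -/
noncomputable def sharp (n m : ℤ) (M : Finset ℤ → ℤ) : Finset ℤ → ℤ :=
  fun k => M (Itilde n m \ k) - wtv n m M k

/- Complementing in `Ĩ` maps the face of the cube over `k` with direction set `D = {i, j}`
(resp. `{i, j, l}`) onto the face with the same directions over `c = Ĩ ∖ (k ∪ D)`, sending the
vertex `k ∪ A` to `c ∪ (D ∖ A)`. So (BZ-1) and (BZ-2) for `M` at `c` are exactly (BZ-1) and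
(BZ-2) for `M*` at `k`. -/

theorem BZ1.compl {n m : ℤ} {M : Finset ℤ → ℤ} (hM : BZ1 n m M) :
    BZ1 n m (fun k => M (Itilde n m \ k)) := by
  intro i j k hi hj hij _ hik hjk
  have hMc := hM i j (Itilde n m \ insert i (insert j k)) hi hj hij Finset.sdiff_subset
    (by simp) (by simp)
  generalize hc : Itilde n m \ insert i (insert j k) = c at hMc
  have hc_i : Itilde n m \ insert j k = insert i c := by grind
  have hc_j : Itilde n m \ insert i k = insert j c := by grind
  have hc_ij : Itilde n m \ k = insert i (insert j c) := by grind
  simp only [hc, hc_i, hc_j, hc_ij]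
  omega

theorem BZ2.compl {n m : ℤ} {M : Finset ℤ → ℤ} (hM : BZ2 n m M) :
    BZ2 n m (fun k => M (Itilde n m \ k)) := by
  intro i j l k hi hj hl hij hjl _ hik hjk hlk
  have hMc := hM i j l (Itilde n m \ insert i (insert j (insert l k))) hi hj hl hij hjl
    Finset.sdiff_subset (by simp) (by simp) (by simp)
  generalize hc : Itilde n m \ insert i (insert j (insert l k)) = c at hMc
  have hc_i : Itilde n m \ insert j (insert l k) = insert i c := by grind
  have hc_j : Itilde n m \ insert i (insert l k) = insert j c := by grind
  have hc_l : Itilde n m \ insert i (insert j k) = insert l c := by grind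
  have hc_ij : Itilde n m \ insert l k = insert i (insert j c) := by grind
  have hc_il : Itilde n m \ insert j k = insert i (insert l c) := by grind
  have hc_jl : Itilde n m \ insert i k = insert j (insert l c) := by grind
  simp only [hc_i, hc_j, hc_l, hc_ij, hc_il, hc_jl]
  omega

theorem stmt2_general (n m : ℤ) (M : Finset ℤ → ℤ)
    (hBZ1 : BZ1 n m M) (hBZ2 : BZ2 n m M) :
    BZ1 n m (fun k => M (Itilde n m \ k)) ∧ BZ2 n m (fun k => M (Itilde n m \ k)) :=
  ⟨hBZ1.compl, hBZ2.compl⟩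

/-- If M is a BZ datum (satisfying (BZ-1) and (BZ-2) with M_∅ = M_Ĩ = 0), then
its complement M*, defined by (M*)_k = M_{Ĩ∖k}, again satisfies (BZ-1) and (BZ-2). -/
theorem stmt2 (n m : ℤ) (hm : 0 < m) (M : Finset ℤ → ℤ)
    (h0 : M ∅ = 0) (h1 : M (Itilde n m) = 0)
    (hBZ1 : BZ1 n m M) (hBZ2 : BZ2 n m M) :
    BZ1 n m (fun k => M (Itilde n m \ k)) ∧ BZ2 n m (fun k => M (Itilde n m \ k)) :=
  stmt2_general n m M hBZ1 hBZ2
end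

section
/- Let M be an e-BZ datum associated to the finite interval I = [n+1, n+m]: a collection of integers M_k indexed by nonempty proper subsets k of Ĩ = [n+1, n+m+1], satisfying the edge inequalities (BZ-1), the tropical Plücker relations (BZ-2), and the normalization M_{[n+1,i]} = 0 for every i ∈ I. Then M_k ≤ 0 for every Maya diagram k. -/
/-! Along any chain of subsets, (BZ-1) makes the marginal gain `M (insert i k) - M k` of a new
element `i` increase with `k`. If `i` is the least element of `Ĩ` missing from `k`, then `k`
contains the initial interval `[n+1, i-1]`, on which the marginal gain of `i` is
`M [n+1, i] - M [n+1, i-1] = 0` by the normalization. Hence `M k ≤ M (insert i k)`, and adding the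
missing elements one by one climbs from `M k` up to `M Ĩ = 0`. -/

variable {n m : ℤ} {M : Finset ℤ → ℤ}

theorem BZ1.insert_sub_le_insert_sub_of_subset (h : BZ1 n m M) {i : ℤ} (hi : i ∈ Itilde n m)
    {b c : Finset ℤ} (hbc : b ⊆ c) (hc : c ⊆ Itilde n m) (hic : i ∉ c) :
    M (insert i b) - M b ≤ M (insert i c) - M c := by
  suffices hgrow : ∀ s ⊆ c \ b, M (insert i b) - M b ≤ M (insert i (b ∪ s)) - M (b ∪ s) by
    simpa [Finset.union_sdiff_of_subset hbc] using hgrow (c \ b) subset_rfl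
  intro s hs
  induction s using Finset.induction_on with
  | empty => simp
  | insert a s ha ih =>
    obtain ⟨hac, hab⟩ := Finset.mem_sdiff.mp (hs (Finset.mem_insert_self a s))
    have hsub : s ⊆ c \ b := (Finset.subset_insert a s).trans hs
    have hbs : b ∪ s ⊆ c := Finset.union_subset hbc fun x hx => (Finset.mem_sdiff.mp (hsub hx)).1
    have hedge := h i a (b ∪ s) hi (hc hac) (ne_of_mem_of_not_mem hac hic).symm
      (hbs.trans hc) (fun hi' => hic (hbs hi')) (by simp [hab, ha])
    rw [Finset.union_insert]
    linarith [ih hsub]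

theorem eBZ.apply_Icc_eq_zero (hM : eBZ n m M) {i : ℤ} (hni : n ≤ i) (him : i ≤ n + m + 1) :
    M (Finset.Icc (n + 1) i) = 0 := by
  obtain ⟨hempty, hfull, -, -, hnorm⟩ := hM
  rcases hni.eq_or_lt with rfl | hni
  · simpa using hempty
  rcases him.eq_or_lt with rfl | him
  · exact hfull
  · exact hnorm i (Finset.mem_Icc.mpr ⟨hni, by omega⟩)

theorem eBZ.le_insert_of_isLeast (hM : eBZ n m M) {k : Finset ℤ} (hk : k ⊆ Itilde n m) {i : ℤ}
    (hi : IsLeast ↑(Itilde n m \ k) i) : M k ≤ M (insert i k) := by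
  obtain ⟨hiI, hik⟩ := Finset.mem_sdiff.mp hi.1
  have hrange : n + 1 ≤ i ∧ i ≤ n + m + 1 := Finset.mem_Icc.mp hiI
  have hinit : Finset.Icc (n + 1) (i - 1) ⊆ k := by
    intro x hx
    rw [Finset.mem_Icc] at hx
    by_contra hxk
    have := hi.2 (Finset.mem_sdiff.mpr ⟨Finset.mem_Icc.mpr ⟨hx.1, by omega⟩, hxk⟩)
    omega
  have hmono := hM.2.2.1.insert_sub_le_insert_sub_of_subset hiI hinit hk hik
  have hinsert : insert i (Finset.Icc (n + 1) (i - 1)) = Finset.Icc (n + 1) i := by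
    ext x; simp only [Finset.mem_insert, Finset.mem_Icc]; omega
  rw [hinsert, hM.apply_Icc_eq_zero (by omega) hrange.2,
    hM.apply_Icc_eq_zero (by omega) (by omega)] at hmono
  linarith

theorem stmt3_general (n m : ℤ) (M : Finset ℤ → ℤ) (hM : eBZ n m M) :
    ∀ k ⊆ Itilde n m, M k ≤ 0 := by
  intro k hk
  induction hcard : (Itilde n m \ k).card generalizing k with
  | zero =>
    rw [Finset.card_eq_zero, Finset.sdiff_eq_empty_iff_subset] at hcard
    rw [hk.antisymm hcard]
    exact hM.2.1.le
  | succ t ih =>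
    have hne : (Itilde n m \ k).Nonempty := Finset.card_pos.mp (by omega)
    obtain ⟨i, hleast⟩ : ∃ i, IsLeast (↑(Itilde n m \ k) : Set ℤ) i :=
      ⟨_, Finset.isLeast_min' _ hne⟩
    have hiI : i ∈ Itilde n m := (Finset.mem_sdiff.mp hleast.1).1
    calc M k ≤ M (insert i k) := hM.le_insert_of_isLeast hk hleast
      _ ≤ 0 := ih _ (Finset.insert_subset hiI hk) (by
        rw [Finset.sdiff_insert, Finset.card_erase_of_mem hleast.1, hcard]; rfl)

/-- All components of an e-BZ datum are nonpositive. -/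
theorem stmt3 (n m : ℤ) (hm : 0 < m) (M : Finset ℤ → ℤ) (hM : eBZ n m M) :
    ∀ k ⊆ Itilde n m, M k ≤ 0 :=
  stmt3_general n m M hM
end

section
/- Let M be an e-BZ datum associated to I = [n+1, n+m]. Define wt^∨(M) := Σ_{i∈I} M_{[i+1,n+m+1]} h_i and define the sharp of M by (M^♯)_k := M_{k^c} − ⟨wt^∨(M), k⟩, where k^c = Ĩ∖k and ⟨wt^∨(M), k⟩ = Σ_{i∈I} M_{[i+1,n+m+1]} ⟨h_i, k⟩. Then (M^♯)^♯ = M. -/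
/-!
Two observations make ♯ an involution. First, on a tail interval `[i+1, n+m+1]` the pairing picks
out the single coefficient `-M_{[i+1,n+m+1]}`, while the complement `[n+1, i]` carries the value `0`
by normalization; so ♯ fixes every tail value, hence `wt^∨(M^♯) = wt^∨(M)`. Second, `⟨h_i, ·⟩` is
odd under complementation in `Ĩ`. Hence the two weight corrections in `(M^♯)^♯_k` cancel and
`(M^♯)^♯_k = M_{(k^c)^c} = M_k`.
-/

theorem pairH_sdiff {s : Finset ℤ} {i : ℤ} (hi : i ∈ s) (hi' : i + 1 ∈ s) (k : Finset ℤ) :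
    pairH i (s \ k) = -pairH i k := by
  unfold pairH
  simp only [Finset.mem_sdiff, hi, hi', true_and]
  by_cases hik : i ∈ k <;> by_cases hik' : i + 1 ∈ k <;> simp [hik, hik']

theorem pairH_Icc_of_lt {i j c : ℤ} (hj : j < c) :
    pairH j (Finset.Icc (i + 1) c) = if j = i then -1 else 0 := by
  unfold pairH
  simp only [Finset.mem_Icc]
  split_ifs <;> omega

section Tail

variable {n m i : ℤ}

theorem wtv_Icc_tail (M : Finset ℤ → ℤ) (hi : i ∈ Finset.Icc (n + 1) (n + m)) :
    wtv n m M (Finset.Icc (i + 1) (n + m + 1)) = -M (Finset.Icc (i + 1) (n + m + 1)) := by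
  unfold wtv
  rw [Finset.sum_eq_single_of_mem i hi]
  · rw [pairH_Icc_of_lt (by simp only [Finset.mem_Icc] at hi; omega), if_pos rfl, mul_neg_one]
  · intro j hj hji
    rw [pairH_Icc_of_lt (by simp only [Finset.mem_Icc] at hj; omega), if_neg hji, mul_zero]

theorem Itilde_sdiff_Icc_tail (hi : i ∈ Finset.Icc (n + 1) (n + m)) :
    Itilde n m \ Finset.Icc (i + 1) (n + m + 1) = Finset.Icc (n + 1) i := by
  simp only [Finset.mem_Icc] at hi
  ext x
  simp only [Itilde, Finset.mem_sdiff, Finset.mem_Icc]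
  omega

theorem sharp_Icc_tail {M : Finset ℤ → ℤ} (hM : eNorm n m M)
    (hi : i ∈ Finset.Icc (n + 1) (n + m)) :
    sharp n m M (Finset.Icc (i + 1) (n + m + 1)) = M (Finset.Icc (i + 1) (n + m + 1)) := by
  rw [sharp, Itilde_sdiff_Icc_tail hi, wtv_Icc_tail M hi, hM i hi, zero_sub, neg_neg]

end Tail

theorem wtv_sharp {n m : ℤ} {M : Finset ℤ → ℤ} (hM : eNorm n m M) :
    wtv n m (sharp n m M) = wtv n m M :=
  funext fun _ => Finset.sum_congr rfl fun _ hj => by rw [sharp_Icc_tail hM hj]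

theorem wtv_Itilde_sdiff (n m : ℤ) (M : Finset ℤ → ℤ) (k : Finset ℤ) :
    wtv n m M (Itilde n m \ k) = -wtv n m M k := by
  unfold wtv
  rw [← Finset.sum_neg_distrib]
  refine Finset.sum_congr rfl fun j hj => ?_
  simp only [Finset.mem_Icc] at hj
  rw [pairH_sdiff (by simp only [Itilde, Finset.mem_Icc]; omega)
    (by simp only [Itilde, Finset.mem_Icc]; omega), mul_neg]

theorem stmt4_general (n m : ℤ) (M : Finset ℤ → ℤ) (hM : eBZ n m M) :
    ∀ k ⊆ Itilde n m, sharp n m (sharp n m M) k = M k := by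
  intro k hk
  have hcompl : Itilde n m \ (Itilde n m \ k) = k := Finset.sdiff_sdiff_eq_self hk
  simp only [sharp, wtv_sharp hM.2.2.2.2, hcompl, wtv_Itilde_sdiff]
  ring

/-- The sharp operation is an involution: (M^♯)^♯ = M on Maya diagrams. -/
theorem stmt4 (n m : ℤ) (hm : 0 < m) (M : Finset ℤ → ℤ) (hM : eBZ n m M) :
    ∀ k ⊆ Itilde n m, sharp n m (sharp n m M) k = M k :=
  stmt4_general n m M hM
end

section
/- Let M be an e-BZ datum associated to I = [n+1, n+m]. Define ε_i(M) := −M_{[n+1,i−1]∪{i+1}} and ε_i*(M) := −M_{[i+1,n+m+1]} − M_{{i}∪[i+2,n+m+1]} + M_{[i+2,n+m+1]} + M_{[i,n+m+1]}. Then ε_i(M^♯) = ε_i*(M), where (M^♯)_k = M_{Ĩ∖k} − Σ_{j∈I} M_{[j+1,n+m+1]} ⟨h_j, k⟩. -/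
theorem Finset.sum_mul_ite_eq_of_notMem {α R : Type*} [DecidableEq α] [NonAssocSemiring R]
    {s : Finset α} {f : α → R} {c : α} (hc : c ∉ s → f c = 0) :
    ∑ j ∈ s, f j * (if j = c then 1 else 0) = f c := by
  simp only [mul_ite, mul_one, mul_zero, Finset.sum_ite_eq']
  split_ifs with h
  · rfl
  · exact (hc h).symm

theorem pairH_insert_succ_Icc {a i j : ℤ} (hai : a ≤ i) (haj : a ≤ j) :
    pairH j (insert (i + 1) (Finset.Icc a (i - 1))) =
      (if j = i - 1 then 1 else 0) - (if j = i then 1 else 0) + (if j = i + 1 then 1 else 0) := by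
  simp only [pairH, Finset.mem_insert, Finset.mem_Icc]
  split_ifs <;> omega

theorem sdiff_insert_succ_Icc {n m i : ℤ} (hi : i ∈ Finset.Icc (n + 1) (n + m)) :
    Itilde n m \ insert (i + 1) (Finset.Icc (n + 1) (i - 1)) =
      insert i (Finset.Icc (i + 2) (n + m + 1)) := by
  rw [Finset.mem_Icc] at hi
  ext x
  simp only [Itilde, Finset.mem_sdiff, Finset.mem_insert, Finset.mem_Icc]
  omega

/-- Only three terms of `wtv` survive; the boundary ones vanish by `M_Ĩ = 0` (for `i = n + 1`)
and `M_∅ = 0` (for `i = n + m`). -/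
theorem wtv_insert_succ_Icc {n m i : ℤ} {M : Finset ℤ → ℤ} (hempty : M ∅ = 0)
    (hfull : M (Itilde n m) = 0) (hi : i ∈ Finset.Icc (n + 1) (n + m)) :
    wtv n m M (insert (i + 1) (Finset.Icc (n + 1) (i - 1))) =
      M (Finset.Icc i (n + m + 1)) - M (Finset.Icc (i + 1) (n + m + 1))
        + M (Finset.Icc (i + 2) (n + m + 1)) := by
  set f : ℤ → ℤ := fun j => M (Finset.Icc (j + 1) (n + m + 1))
  have hI := Finset.mem_Icc.1 hi
  have hpair : ∀ j ∈ Finset.Icc (n + 1) (n + m),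
      f j * pairH j (insert (i + 1) (Finset.Icc (n + 1) (i - 1))) =
        f j * (if j = i - 1 then 1 else 0) - f j * (if j = i then 1 else 0)
          + f j * (if j = i + 1 then 1 else 0) := fun j hj => by
    rw [pairH_insert_succ_Icc hI.1 (Finset.mem_Icc.1 hj).1]
    ring
  have hlow : i - 1 ∉ Finset.Icc (n + 1) (n + m) → f (i - 1) = 0 := fun h => by
    rw [Finset.mem_Icc] at h
    simp only [f, show i - 1 + 1 = n + 1 by omega]
    exact hfull
  have hhigh : i + 1 ∉ Finset.Icc (n + 1) (n + m) → f (i + 1) = 0 := fun h => by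
    rw [Finset.mem_Icc] at h
    simp only [f, Finset.Icc_eq_empty (show ¬ i + 1 + 1 ≤ n + m + 1 by omega)]
    exact hempty
  rw [wtv, Finset.sum_congr rfl hpair, Finset.sum_add_distrib, Finset.sum_sub_distrib,
    Finset.sum_mul_ite_eq_of_notMem hlow, Finset.sum_mul_ite_eq_of_notMem (absurd hi),
    Finset.sum_mul_ite_eq_of_notMem hhigh]
  simp only [f, sub_add_cancel, show i + 1 + 1 = i + 2 by ring]

theorem stmt6_general (n m : ℤ) (M : Finset ℤ → ℤ) (hM : eBZ n m M)
    (i : ℤ) (hi : i ∈ Finset.Icc (n + 1) (n + m)) :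
    -(sharp n m M (insert (i + 1) (Finset.Icc (n + 1) (i - 1)))) =
      -M (Finset.Icc (i + 1) (n + m + 1)) - M (insert i (Finset.Icc (i + 2) (n + m + 1)))
        + M (Finset.Icc (i + 2) (n + m + 1)) + M (Finset.Icc i (n + m + 1)) := by
  obtain ⟨hempty, hfull, -⟩ := hM
  rw [sharp, sdiff_insert_succ_Icc hi, wtv_insert_succ_Icc hempty hfull hi]
  ring

/-- ε_i(M^♯) = ε_i*(M). -/
theorem stmt6 (n m : ℤ) (hm : 0 < m) (M : Finset ℤ → ℤ) (hM : eBZ n m M)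
    (i : ℤ) (hi : i ∈ Finset.Icc (n + 1) (n + m)) :
    -(sharp n m M (insert (i + 1) (Finset.Icc (n + 1) (i - 1)))) =
      -M (Finset.Icc (i + 1) (n + m + 1)) - M (insert i (Finset.Icc (i + 2) (n + m + 1)))
        + M (Finset.Icc (i + 2) (n + m + 1)) + M (Finset.Icc i (n + m + 1)) :=
  stmt6_general n m M hM i hi
end

section
/- Let M be an e-BZ datum on I = [n+1, n+m] and let i ∈ I. Let ℳ(i)* denote the set of Maya diagrams k ⊆ Ĩ with i ∉ k and i+1 ∈ k, and ℳ(i) those with i ∈ k, i+1 ∉ k. Suppose N and N' are two e-BZ data such that N_k = N'_k = M_k + 1 for all k ∈ ℳ(i)*, and N_k = N'_k = M_k for all Maya diagrams k not in ℳ(i) ∪ ℳ(i)*. Then N = N', i.e., N_k = N'_k also for all k ∈ ℳ(i). -/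
open Finset

/-- The number of moves (adding a missing element of `[n+1, i]`, removing an element `≥ i + 2`)
needed to reach `[n+1, i]`. -/
noncomputable def intervalDefect (n i : ℤ) (k : Finset ℤ) : ℕ :=
  #(Icc (n + 1) i \ k) + #(k.filter fun x => i + 2 ≤ x)

lemma intervalDefect_insert_lt {n i s : ℤ} {k : Finset ℤ} (hs : s ∈ Icc (n + 1) i \ k) :
    intervalDefect n i (insert s k) < intervalDefect n i k := by
  have hlt : #(Icc (n + 1) i \ insert s k) < #(Icc (n + 1) i \ k) :=
    card_lt_card <| (ssubset_iff_of_subset (sdiff_subset_sdiff subset_rfl (subset_insert s k))).2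
      ⟨s, hs, by simp⟩
  have hsi : ¬ i + 2 ≤ s := by simp only [mem_sdiff, mem_Icc] at hs; omega
  unfold intervalDefect
  rw [filter_insert, if_neg hsi]
  omega

lemma intervalDefect_erase_lt {n i l : ℤ} {k : Finset ℤ} (hl : l ∈ k) (hil : i + 2 ≤ l) :
    intervalDefect n i (k.erase l) < intervalDefect n i k := by
  have hsdiff : Icc (n + 1) i \ k.erase l = Icc (n + 1) i \ k := by
    ext x
    simp only [mem_sdiff, mem_erase, mem_Icc]
    constructor
    · rintro ⟨hx, hxl⟩
      exact ⟨hx, fun hxk => hxl ⟨by omega, hxk⟩⟩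
    · rintro ⟨hx, hxk⟩
      exact ⟨hx, fun h => hxk h.2⟩
  have hlt : #((k.erase l).filter fun x => i + 2 ≤ x) < #(k.filter fun x => i + 2 ≤ x) :=
    card_lt_card <| (ssubset_iff_of_subset (filter_subset_filter _ (erase_subset l k))).2
      ⟨l, mem_filter.2 ⟨hl, hil⟩, by simp⟩
  unfold intervalDefect
  rw [hsdiff]
  omega

lemma eq_Icc_of_intervalDefect_eq_zero {n m i : ℤ} {k : Finset ℤ} (hk : k ⊆ Itilde n m)
    (hi1k : i + 1 ∉ k) (hd : intervalDefect n i k = 0) : k = Icc (n + 1) i := by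
  simp only [intervalDefect, Nat.add_eq_zero_iff, card_eq_zero, sdiff_eq_empty_iff_subset,
    filter_eq_empty_iff, not_le] at hd
  refine Subset.antisymm (fun x hx => ?_) hd.1
  have hxI := hk hx
  have hxi1 : x ≠ i + 1 := fun h => hi1k (h ▸ hx)
  have := hd.2 hx
  simp only [Itilde, mem_Icc] at hxI ⊢
  omega

lemma BZ2.add_eq_add_of_eq {n m : ℤ} {N N' : Finset ℤ → ℤ} (hN : BZ2 n m N) (hN' : BZ2 n m N')
    {a b c : ℤ} {k : Finset ℤ} (ha : a ∈ Itilde n m) (hb : b ∈ Itilde n m)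
    (hc : c ∈ Itilde n m) (hab : a < b) (hbc : b < c) (hk : k ⊆ Itilde n m)
    (hak : a ∉ k) (hbk : b ∉ k) (hck : c ∉ k)
    (hab_k : N (insert a (insert b k)) = N' (insert a (insert b k)))
    (hc_k : N (insert c k) = N' (insert c k))
    (hbc_k : N (insert b (insert c k)) = N' (insert b (insert c k)))
    (ha_k : N (insert a k) = N' (insert a k)) :
    N (insert a (insert c k)) + N (insert b k) = N' (insert a (insert c k)) + N' (insert b k) := by
  rw [hN a b c k ha hb hc hab hbc hk hak hbk hck, hN' a b c k ha hb hc hab hbc hk hak hbk hck,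
    hab_k, hc_k, hbc_k, ha_k]

section Uniqueness

variable {n m i : ℤ} {N N' : Finset ℤ → ℤ}

lemma mem_Itilde_of_mem_Icc (hi : i ∈ Icc (n + 1) (n + m)) :
    i ∈ Itilde n m ∧ i + 1 ∈ Itilde n m := by
  simp only [Itilde, mem_Icc] at hi ⊢
  omega

lemma eq_of_eq_insert (hN : BZ2 n m N) (hN' : BZ2 n m N') (hi : i ∈ Icc (n + 1) (n + m))
    (hoff : ∀ k ⊆ Itilde n m, (i ∈ k → i + 1 ∈ k) → N k = N' k)
    {k : Finset ℤ} (hk : k ⊆ Itilde n m) (hik : i ∈ k) (hi1k : i + 1 ∉ k)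
    {s : ℤ} (hs : s ∈ Icc (n + 1) i \ k) (hsk : N (insert s k) = N' (insert s k)) :
    N k = N' k := by
  obtain ⟨hiI, hi1I⟩ := mem_Itilde_of_mem_Icc hi
  obtain ⟨hsIcc, hsk'⟩ := mem_sdiff.1 hs
  have hsi : s < i := lt_of_le_of_ne (mem_Icc.1 hsIcc).2 (by rintro rfl; exact hsk' hik)
  have hsI : s ∈ Itilde n m := by simp only [Itilde, mem_Icc] at hsIcc hiI ⊢; omega
  set K := k.erase i
  have hK : K ⊆ Itilde n m := (erase_subset i k).trans hk
  have hkK : insert i K = k := insert_erase hik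
  have hiK : i ∉ K := notMem_erase i k
  have hi1K : i + 1 ∉ K := fun h => hi1k (mem_of_mem_erase h)
  have hsK : s ∉ K := fun h => hsk' (mem_of_mem_erase h)
  have hplucker := hN.add_eq_add_of_eq hN' hsI hiI hi1I hsi (lt_add_one i) hK hsK hiK hi1K
    (by rwa [hkK]) (hoff _ (insert_subset hi1I hK) (by simp [hiK]))
    (hoff _ (insert_subset hiI (insert_subset hi1I hK)) (by simp))
    (hoff _ (insert_subset hsI hK) (by simp [hiK, hsi.ne']))
  rw [hkK, hoff _ (insert_subset hsI (insert_subset hi1I hK)) (by simp [hiK])]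
    at hplucker
  omega

lemma eq_of_eq_erase (hN : BZ2 n m N) (hN' : BZ2 n m N') (hi : i ∈ Icc (n + 1) (n + m))
    (hoff : ∀ k ⊆ Itilde n m, (i ∈ k → i + 1 ∈ k) → N k = N' k)
    {k : Finset ℤ} (hk : k ⊆ Itilde n m) (hik : i ∈ k) (hi1k : i + 1 ∉ k)
    {l : ℤ} (hl : l ∈ k) (hil : i + 2 ≤ l) (hlk : N (k.erase l) = N' (k.erase l)) :
    N k = N' k := by
  obtain ⟨hiI, hi1I⟩ := mem_Itilde_of_mem_Icc hi
  have hlI : l ∈ Itilde n m := hk hl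
  set K := (k.erase i).erase l
  have hK : K ⊆ Itilde n m := ((erase_subset _ _).trans (erase_subset _ _)).trans hk
  have hkK : insert i (insert l K) = k := by
    rw [insert_erase (mem_erase.2 ⟨by omega, hl⟩), insert_erase hik]
  have hklK : insert i K = k.erase l := by
    rw [show K = (k.erase l).erase i from erase_right_comm, insert_erase (mem_erase.2 ⟨by omega, hik⟩)]
  have hiK : i ∉ K := by simp [K]
  have hi1K : i + 1 ∉ K := fun h => hi1k (mem_of_mem_erase (mem_of_mem_erase h))
  have hlK : l ∉ K := notMem_erase l _
  have hplucker := hN.add_eq_add_of_eq hN' hiI hi1I hlI (lt_add_one i) (by omega) hK hiK hi1K hlK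
    (hoff _ (insert_subset hiI (insert_subset hi1I hK)) (by simp))
    (hoff _ (insert_subset hlI hK) (by simp [hiK]; omega))
    (hoff _ (insert_subset hi1I (insert_subset hlI hK)) (by simp))
    (by rwa [hklK])
  rw [hkK, hoff _ (insert_subset hi1I hK) (by simp [hiK])] at hplucker
  omega

/-- The hypothesis `i ∈ k → i + 1 ∈ k` is `k ∉ ℳ(i)`. -/
theorem eq_of_eq_off_maya (hN : BZ2 n m N) (hN' : BZ2 n m N') (hNn : eNorm n m N)
    (hN'n : eNorm n m N') (hi : i ∈ Icc (n + 1) (n + m))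
    (hoff : ∀ k ⊆ Itilde n m, (i ∈ k → i + 1 ∈ k) → N k = N' k) :
    ∀ k ⊆ Itilde n m, N k = N' k := by
  intro k hk
  induction hd : intervalDefect n i k using Nat.strong_induction_on generalizing k with
  | _ d ih =>
  by_cases hmaya : i ∈ k → i + 1 ∈ k
  · exact hoff k hk hmaya
  obtain ⟨hik, hi1k⟩ := Classical.not_imp.1 hmaya
  by_cases hmissing : (Icc (n + 1) i \ k).Nonempty
  · obtain ⟨s, hs⟩ := hmissing
    have hsI : s ∈ Itilde n m := by
      have := (mem_Icc.1 (mem_sdiff.1 hs).1)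
      simp only [Itilde, mem_Icc] at hi ⊢; omega
    exact eq_of_eq_insert hN hN' hi hoff hk hik hi1k hs
      (ih _ (hd ▸ intervalDefect_insert_lt hs) _ (insert_subset hsI hk) rfl)
  by_cases hlarge : (k.filter fun x => i + 2 ≤ x).Nonempty
  · obtain ⟨l, hl⟩ := hlarge
    obtain ⟨hlk, hil⟩ := mem_filter.1 hl
    exact eq_of_eq_erase hN hN' hi hoff hk hik hi1k hlk hil
      (ih _ (hd ▸ intervalDefect_erase_lt hlk hil) _ ((erase_subset l k).trans hk) rfl)
  have hk0 : intervalDefect n i k = 0 := by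
    simp only [not_nonempty_iff_eq_empty] at hmissing hlarge
    simp [intervalDefect, hmissing, hlarge]
  rw [eq_Icc_of_intervalDefect_eq_zero hk hi1k hk0, hNn i hi, hN'n i hi]

end Uniqueness

theorem stmt7_general (n m : ℤ) (M N N' : Finset ℤ → ℤ) (i : ℤ)
    (hi : i ∈ Finset.Icc (n + 1) (n + m))
    (hN : eBZ n m N) (hN' : eBZ n m N')
    (h1 : ∀ k ⊆ Itilde n m, i ∉ k → i + 1 ∈ k → N k = M k + 1 ∧ N' k = M k + 1)
    (h2 : ∀ k ⊆ Itilde n m, ¬(i ∈ k ∧ i + 1 ∉ k) → ¬(i ∉ k ∧ i + 1 ∈ k) →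
      N k = M k ∧ N' k = M k) :
    ∀ k ⊆ Itilde n m, N k = N' k := by
  refine eq_of_eq_off_maya hN.2.2.2.1 hN'.2.2.2.1 hN.2.2.2.2 hN'.2.2.2.2 hi fun k hk hmaya => ?_
  by_cases hstar : i ∉ k ∧ i + 1 ∈ k
  · obtain ⟨hNk, hN'k⟩ := h1 k hk hstar.1 hstar.2
    rw [hNk, hN'k]
  · obtain ⟨hNk, hN'k⟩ := h2 k hk (fun h => h.2 (hmaya h.1)) hstar
    rw [hNk, hN'k]

/-- Uniqueness: two e-BZ data agreeing (with prescribed values M_k + 1 on ℳ(i)* and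
M_k off ℳ(i) ∪ ℳ(i)*) coincide everywhere. -/
theorem stmt7 (n m : ℤ) (hm : 0 < m) (M N N' : Finset ℤ → ℤ) (i : ℤ)
    (hi : i ∈ Finset.Icc (n + 1) (n + m))
    (hM : eBZ n m M) (hN : eBZ n m N) (hN' : eBZ n m N')
    (h1 : ∀ k ⊆ Itilde n m, i ∉ k → i + 1 ∈ k → N k = M k + 1 ∧ N' k = M k + 1)
    (h2 : ∀ k ⊆ Itilde n m, ¬(i ∈ k ∧ i + 1 ∉ k) → ¬(i ∉ k ∧ i + 1 ∈ k) →
      N k = M k ∧ N' k = M k) :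
    ∀ k ⊆ Itilde n m, N k = N' k :=
  stmt7_general n m M N N' i hi hN hN' h1 h2
end

section
/- Let M be an e-BZ datum of type A associated to ℤ: a collection of nonpositive-normalized integers M_k indexed by all Maya diagrams k ⊆ ℤ (of arbitrary charge), such that for every finite interval K the restriction M_K is an e-BZ datum on K, and a stabilization condition (2-b) holds. Suppose M_{k(σ_p Λ_p)} = 0 for every p ∈ ℤ, where k(σ_p Λ_p) = ℤ_{≤ p−1} ∪ {p+1}. Then M_k = 0 for every Maya diagram k ⊆ ℤ. -/
/-- Restriction of a collection indexed by Maya diagrams of ℤ to a finite interval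
K = [a+1, a+b]: k' ↦ M(ℤ_{≤a} ∪ k'). -/
def restrictZ (M : Set ℤ → ℤ) (a : ℤ) : Finset ℤ → ℤ :=
  fun k => M ({x : ℤ | x ≤ a} ∪ ↑k)

/-- k is a Maya diagram of ℤ (of some charge). -/
def MayaZ (k : Set ℤ) : Prop :=
  ∃ r : ℤ, ∃ p q : ℕ, {x : ℤ | x ≤ r - p} ⊆ k ∧ k ⊆ {x : ℤ | x ≤ r + q} ∧
    (k ∩ {x : ℤ | r - p < x}).ncard = p

/-- k ∈ ℳ_ℤ(I) for I = [n+1, n+m]. -/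
def InMZ (n m : ℤ) (k : Set ℤ) : Prop :=
  {x : ℤ | x ≤ n} ⊆ k ∧ k ⊆ {x : ℤ | x ≤ n + m + 1} ∧
    (k ∩ Set.Icc (n + 1) (n + m + 1)).Nonempty ∧ ¬ Set.Icc (n + 1) (n + m + 1) ⊆ k

/-- Ω_I(k) = ℤ_{≤n} ∪ (Ĩ ∖ k). -/
def OmS (n m : ℤ) (k : Set ℤ) : Set ℤ :=
  {x : ℤ | x ≤ n} ∪ (Set.Icc (n + 1) (n + m + 1) \ k)

/-!
Write a Maya diagram as `ℤ_{≤a} ∪ F` with `F ⊆ (a, a+n]` and induct on `n`. If `a+1 ∈ F` it is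
absorbed into `ℤ_{≤a+1}`, which shortens `F`. Otherwise let `t = a+n+1` be the top of `F`:
(BZ-1) for the pair `a+1, t` gives `M_F ≤ 0`, and the tropical Plücker relation for
`a+1 < a+2 < t` reads `0 = min (M_{k ∪ {t}}, M_{k ∪ {a+2, t}})`, with `k = F ∖ {a+2, t}`, one of
which is `M_F`. All other terms of both relations have a shorter finite part and vanish by
induction; the remaining case `F = {a+2}` is the hypothesis on `k(σ_p Λ_p)`.
-/

open Finset

def VanishesUpTo (M : Set ℤ → ℤ) (n : ℕ) : Prop :=
  ∀ (a : ℤ) (F : Finset ℤ), F ⊆ Ioc a (a + n) → restrictZ M a F = 0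

lemma mem_Itilde {n m x : ℤ} : x ∈ Itilde n m ↔ n + 1 ≤ x ∧ x ≤ n + m + 1 := by
  simp [Itilde]

lemma restrictZ_insert_succ (M : Set ℤ → ℤ) (a : ℤ) (F : Finset ℤ) :
    restrictZ M a (insert (a + 1) F) = restrictZ M (a + 1) F := by
  unfold restrictZ
  congr 1
  ext x
  by_cases hx : x ∈ F <;> simp [hx]; omega

lemma MayaZ.exists_eq_union_Ioc {k : Set ℤ} (hk : MayaZ k) :
    ∃ (a : ℤ) (n : ℕ) (F : Finset ℤ), F ⊆ Ioc a (a + n) ∧ k = {x | x ≤ a} ∪ ↑F := by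
  classical
  obtain ⟨r, p, q, hlow, hhigh, -⟩ := hk
  refine ⟨r - p, p + q, (Ioc (r - p) (r + q)).filter (· ∈ k), fun x hx => ?_, ?_⟩
  · simp only [mem_filter, mem_Ioc] at hx ⊢
    push_cast
    omega
  · ext x
    by_cases hxk : x ∈ k
    · have : x ≤ r + q := hhigh hxk
      simp [hxk]
      omega
    · have : ¬ x ≤ r - p := fun h => hxk (hlow h)
      simp [hxk, this]

lemma subset_Ioc_add_one_of_notMem {a b : ℤ} {F : Finset ℤ} (hF : F ⊆ Ioc a b)
    (ha : a + 1 ∉ F) : F ⊆ Ioc (a + 1) b := fun x hx => by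
  have := mem_Ioc.mp (hF hx)
  have : x ≠ a + 1 := ne_of_mem_of_not_mem hx ha
  exact mem_Ioc.mpr (by omega)

lemma erase_subset_Ioc_of_subset_Ioc_add_one {a b : ℤ} {F : Finset ℤ}
    (hF : F ⊆ Ioc a (b + 1)) : F.erase (b + 1) ⊆ Ioc a b := fun x hx => by
  have := mem_Ioc.mp (hF (mem_of_mem_erase hx))
  have := ne_of_mem_erase hx
  exact mem_Ioc.mpr (by omega)

section Induction

variable {M : Set ℤ → ℤ} {n : ℕ} {a : ℤ} {F : Finset ℤ}

lemma vanishesUpTo_zero (hres : ∀ a b : ℤ, 0 < b → eBZ a b (restrictZ M a)) :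
    VanishesUpTo M 0 := by
  intro a F hF
  rw [Nat.cast_zero, add_zero, Ioc_self, subset_empty] at hF
  exact hF ▸ (hres a 1 one_pos).1

lemma VanishesUpTo.restrictZ_nonpos (hres : ∀ a b : ℤ, 0 < b → eBZ a b (restrictZ M a))
    (hZ : VanishesUpTo M n) (hn : 0 < n) (ha : a + 1 ∉ F) (hF : F ⊆ Ioc a (a + n + 1))
    (ht : a + n + 1 ∈ F) : restrictZ M a F ≤ 0 := by
  have hF₁ := subset_Ioc_add_one_of_notMem hF ha
  have hF₂ := erase_subset_Ioc_of_subset_Ioc_add_one hF₁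
  have hBZ1 := (hres a n (by exact_mod_cast hn)).2.2.1 (a + 1) (a + n + 1) (F.erase (a + n + 1))
    (mem_Itilde.mpr (by omega)) (mem_Itilde.mpr (by omega)) (by omega)
    (fun x hx => mem_Itilde.mpr (by have := mem_Ioc.mp (hF₂ hx); omega))
    (fun h => ha (mem_of_mem_erase h)) (notMem_erase _ _)
  rw [insert_erase ht] at hBZ1
  simp only [restrictZ_insert_succ] at hBZ1
  rw [hZ (a + 1) _ (hF₂.trans (Ioc_subset_Ioc le_rfl (by omega))),
    hZ (a + 1) F (hF₁.trans (Ioc_subset_Ioc le_rfl (by omega))),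
    hZ a (F.erase (a + n + 1)) (hF₂.trans (Ioc_subset_Ioc (by omega) le_rfl))] at hBZ1
  linarith

lemma VanishesUpTo.restrictZ_nonneg (hres : ∀ a b : ℤ, 0 < b → eBZ a b (restrictZ M a))
    (hZ : VanishesUpTo M n) (hn : 2 ≤ n) (ha : a + 1 ∉ F) (hF : F ⊆ Ioc a (a + n + 1))
    (ht : a + n + 1 ∈ F) : 0 ≤ restrictZ M a F := by
  set k := (F.erase (a + n + 1)).erase (a + 2) with hk
  have hkIoc : k ⊆ Ioc (a + 2) (a + n) := fun x hx => by
    obtain ⟨hx2, hxt, hxF⟩ : x ≠ a + 2 ∧ x ≠ a + n + 1 ∧ x ∈ F := by simpa [hk] using hx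
    have := mem_Ioc.mp (hF hxF)
    have := ne_of_mem_of_not_mem hxF ha
    exact mem_Ioc.mpr (by omega)
  have hkmem : ∀ x ∈ k, a + 2 < x ∧ x ≤ a + n := fun x hx => mem_Ioc.mp (hkIoc hx)
  have hBZ2 := (hres a n (by omega)).2.2.2.1 (a + 1) (a + 2) (a + n + 1) k
    (mem_Itilde.mpr (by omega)) (mem_Itilde.mpr (by omega)) (mem_Itilde.mpr (by omega))
    (by omega) (by omega)
    (fun x hx => mem_Itilde.mpr (by have := hkmem x hx; omega))
    (fun h => by have := hkmem _ h; omega) (fun h => by have := hkmem _ h; omega)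
    (fun h => by have := hkmem _ h; omega)
  have hk₁ : k ⊆ Ioc (a + 1) (a + 1 + n) := hkIoc.trans (Ioc_subset_Ioc (by omega) (by omega))
  simp only [restrictZ_insert_succ] at hBZ2
  rw [hZ (a + 1) (insert (a + n + 1) k) (insert_subset (mem_Ioc.mpr (by omega)) hk₁),
    hZ a (insert (a + 2) k)
      (insert_subset (mem_Ioc.mpr (by omega)) (hkIoc.trans (Ioc_subset_Ioc (by omega) le_rfl))),
    hZ (a + 1) (insert (a + 2) k) (insert_subset (mem_Ioc.mpr (by omega)) hk₁),
    hZ (a + 1) k hk₁] at hBZ2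
  have hF_cases : F = insert (a + n + 1) k ∨ F = insert (a + 2) (insert (a + n + 1) k) := by
    by_cases h2 : a + 2 ∈ F
    · right
      rw [hk, insert_comm, insert_erase (mem_erase.mpr ⟨by omega, h2⟩), insert_erase ht]
    · left
      rw [hk, erase_eq_of_notMem (fun h => h2 (mem_of_mem_erase h)), insert_erase ht]
  rcases hF_cases with h | h <;> rw [h] <;> omega

lemma VanishesUpTo.succ (hres : ∀ a b : ℤ, 0 < b → eBZ a b (restrictZ M a))
    (heps : ∀ p : ℤ, M ({x : ℤ | x ≤ p - 1} ∪ {p + 1}) = 0) (hZ : VanishesUpTo M n) :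
    VanishesUpTo M (n + 1) := by
  intro a F hF
  rw [Nat.cast_succ, ← add_assoc] at hF
  by_cases ha : a + 1 ∈ F
  · rw [← insert_erase ha, restrictZ_insert_succ]
    exact hZ (a + 1) _ ((subset_Ioc_add_one_of_notMem ((erase_subset _ _).trans hF)
      (notMem_erase _ _)).trans (Ioc_subset_Ioc le_rfl (by omega)))
  by_cases ht : a + n + 1 ∈ F
  swap
  · exact hZ a F (erase_eq_of_notMem ht ▸ erase_subset_Ioc_of_subset_Ioc_add_one hF)
  obtain hn | hn : n = 1 ∨ 2 ≤ n := by
    rcases n with _ | _ | n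
    · exact absurd ht (by simpa using ha)
    all_goals omega
  · subst hn
    have hF' : F = {a + 2} := eq_singleton_iff_unique_mem.mpr ⟨by simpa [add_assoc] using ht,
      fun x hx => by
        have := mem_Ioc.mp (hF hx)
        have := ne_of_mem_of_not_mem hx ha
        omega⟩
    rw [hF', ← heps (a + 1)]
    unfold restrictZ
    congr 1
    ext x
    simp [add_assoc, one_add_one_eq_two]
  · exact le_antisymm (hZ.restrictZ_nonpos hres (by omega) ha hF ht)
      (hZ.restrictZ_nonneg hres hn ha hF ht)

lemma vanishesUpTo_of_eBZ (hres : ∀ a b : ℤ, 0 < b → eBZ a b (restrictZ M a))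
    (heps : ∀ p : ℤ, M ({x : ℤ | x ≤ p - 1} ∪ {p + 1}) = 0) (n : ℕ) : VanishesUpTo M n := by
  induction n with
  | zero => exact vanishesUpTo_zero hres
  | succ n ih => exact ih.succ hres heps

end Induction

theorem stmt15_general (M : Set ℤ → ℤ)
    (hres : ∀ a b : ℤ, 0 < b → eBZ a b (restrictZ M a))
    (heps : ∀ p : ℤ, M ({x : ℤ | x ≤ p - 1} ∪ {p + 1}) = 0) :
    ∀ k, MayaZ k → M k = 0 := by
  intro k hk
  obtain ⟨a, n, F, hF, rfl⟩ := hk.exists_eq_union_Ioc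
  exact vanishesUpTo_of_eBZ hres heps n a F hF

/-- For an e-BZ datum associated to ℤ (restricting to e-BZ data on all finite
intervals and satisfying the stabilization condition (2-b)): if the component at
k(σ_p Λ_p) = ℤ_{≤p−1} ∪ {p+1} vanishes for every p, then all components vanish. -/
theorem stmt15 (M : Set ℤ → ℤ)
    (hres : ∀ a b : ℤ, 0 < b → eBZ a b (restrictZ M a))
    (hstab : ∀ k, MayaZ k → ∃ n m : ℤ, 0 < m ∧ InMZ n m k ∧
      ∀ n' m' : ℤ, 0 < m' → n' ≤ n → n + m ≤ n' + m' →
        M (OmS n' m' k) = M (OmS n m k))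
    (heps : ∀ p : ℤ, M ({x : ℤ | x ≤ p - 1} ∪ {p + 1}) = 0) :
    ∀ k, MayaZ k → M k = 0 :=
  stmt15_general M hres heps
end

section
/- Let B be a crystal for the quantized affine algebra U_q(ŝl_l) (with index set Î = {0,…,l−1}) and b_∞ ∈ B an element of weight 0. Assume: (1) wt(B) ⊆ Q̂⁻ (the negative root cone); (2) b_∞ is the unique element of weight 0; (3) ε_p(b_∞) = 0 for all p; (4) ε_p(b) ∈ ℤ for all p, b; (5) for each p there is a strict crystal embedding Ψ_p : B → B ⊗ B_p, where B_p = {b_p(n) : n ∈ ℤ} is the standard elementary crystal; (6) Ψ_p(B) ⊆ B ⊗ {f_p^n b_p : n ≥ 0}; (7) for every b ≠ b_∞ there exists p with Ψ_p(b) = b' ⊗ f_p^n b_p, n > 0. Then the crystal graph of B is connected: every element of B is obtained from b_∞ by a finite sequence of lowering operators f_p. -/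
/-- The Cartan matrix of type A_{l-1}^{(1)} with cyclic index set Î = Fin l. -/
def acartan (l : ℕ) (p q : Fin l) : ℤ :=
  if p = q then 2
  else if ((p : ℕ) + 1) % l = (q : ℕ) ∨ ((q : ℕ) + 1) % l = (p : ℕ) then -1 else 0

/-- A U_q(ŝl_l)-crystal: a set B with weight (recorded by its coefficients in the
simple roots), ε_p, φ_p, and Kashiwara operators e_p, f_p (with value `none` for 0),
satisfying the usual crystal axioms. -/
structure AffCrystal (l : ℕ) where
  B : Type
  wt : B → Fin l → ℤ
  eps : Fin l → B → ℤ
  phi : Fin l → B → ℤ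
  e : Fin l → B → Option B
  f : Fin l → B → Option B
  phi_eq : ∀ p b, phi p b = eps p b + ∑ q, acartan l p q * wt b q
  wt_e : ∀ p b b', e p b = some b' → ∀ q, wt b' q = wt b q + (if q = p then 1 else 0)
  wt_f : ∀ p b b', f p b = some b' → ∀ q, wt b' q = wt b q - (if q = p then 1 else 0)
  eps_e : ∀ p b b', e p b = some b' → eps p b' = eps p b - 1
  eps_f : ∀ p b b', f p b = some b' → eps p b' = eps p b + 1
  e_f : ∀ p b b', e p b = some b' ↔ f p b' = some b

/-- The raising Kashiwara operator on B ⊗ B_p, where an element b' ⊗ b_p(n) of the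
tensor product with the elementary crystal B_p is encoded as the pair (b', n);
recall ε_q(b_p(n)) = φ_q(b_p(n)) = −∞ for q ≠ p and ε_p(b_p(n)) = −n. -/
def tensorE (l : ℕ) (C : AffCrystal l) (p q : Fin l) (x : C.B × ℤ) : Option (C.B × ℤ) :=
  if q = p then
    (if -x.2 ≤ C.phi p x.1 then (C.e p x.1).map (fun b => (b, x.2))
     else some (x.1, x.2 + 1))
  else (C.e q x.1).map (fun b => (b, x.2))

/-- The lowering Kashiwara operator on B ⊗ B_p. -/
def tensorF (l : ℕ) (C : AffCrystal l) (p q : Fin l) (x : C.B × ℤ) : Option (C.B × ℤ) :=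
  if q = p then
    (if -x.2 < C.phi p x.1 then (C.f p x.1).map (fun b => (b, x.2))
     else some (x.1, x.2 - 1))
  else (C.f q x.1).map (fun b => (b, x.2))

/-- Ψ : B → B ⊗ B_p (with b' ⊗ b_p(n) encoded as (b', n)) is a strict embedding:
injective, weight-preserving, compatible with ε (via the tensor product rule), and
commuting with all Kashiwara operators e_q, f_q. -/
def StrictEmb (l : ℕ) (C : AffCrystal l) (p : Fin l) (Ψ : C.B → C.B × ℤ) : Prop :=
  Function.Injective Ψ ∧
  (∀ b q, C.wt b q = C.wt (Ψ b).1 q + (if q = p then (Ψ b).2 else 0)) ∧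
  (∀ b q, C.eps q b =
    (if q = p then
      max (C.eps p (Ψ b).1) (-(Ψ b).2 - ∑ r, acartan l p r * C.wt (Ψ b).1 r)
     else C.eps q (Ψ b).1)) ∧
  (∀ b q, (C.e q b).map Ψ = tensorE l C p q (Ψ b)) ∧
  (∀ b q, (C.f q b).map Ψ = tensorF l C p q (Ψ b))

/-
The height `-∑ q, wt b q` is nonnegative and vanishes only at `b_∞`, and by (7) every
`b ≠ b_∞` has some `Ψ_p b = b' ⊗ b_p(n)` with `n < 0`, so `b'` has strictly smaller height.
Induction on height through the tensor product rule then shows that every `b ≠ b_∞` has some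
`ε_q b > 0` and that `ε_q b > 0` forces `e_q b ≠ 0`. Hence `b = f_q (e_q b)` with `e_q b` one
step closer to `b_∞`.
-/

namespace AffCrystal

variable {l : ℕ} (C : AffCrystal l)

def height (b : C.B) : ℤ := -∑ q, C.wt b q

variable {C}

lemma height_of_e_eq_some {q : Fin l} {b c : C.B} (h : C.e q b = some c) :
    C.height c = C.height b - 1 := by
  simp only [height, C.wt_e q b c h, Finset.sum_add_distrib, Finset.sum_ite_eq',
    Finset.mem_univ, if_true]
  ring

end AffCrystal

namespace StrictEmb

open AffCrystal

variable {l : ℕ} {C : AffCrystal l} {p : Fin l} {Ψ : C.B → C.B × ℤ}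

lemma height_fst (hΨ : StrictEmb l C p Ψ) (b : C.B) :
    C.height (Ψ b).1 = C.height b + (Ψ b).2 := by
  simp only [height, hΨ.2.1 b, Finset.sum_add_distrib, Finset.sum_ite_eq', Finset.mem_univ,
    if_true]
  ring

lemma eps_fst_le (hΨ : StrictEmb l C p Ψ) (b : C.B) (q : Fin l) :
    C.eps q (Ψ b).1 ≤ C.eps q b := by
  rw [hΨ.2.2.1 b q]
  split_ifs with hq
  · subst hq; exact le_max_left _ _
  · exact le_rfl

lemma neg_snd_sub_le_eps (hΨ : StrictEmb l C p Ψ) (b : C.B) :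
    -(Ψ b).2 - ∑ r, acartan l p r * C.wt (Ψ b).1 r ≤ C.eps p b := by
  rw [hΨ.2.2.1 b p, if_pos rfl]
  exact le_max_right _ _

lemma isSome_e_of_fst (hΨ : StrictEmb l C p Ψ) {b : C.B} {q : Fin l} (hb : 0 < C.eps q b)
    (hfst : 0 < C.eps q (Ψ b).1 → (C.e q (Ψ b).1).isSome) : (C.e q b).isSome := by
  rw [← Option.isSome_map (f := Ψ), hΨ.2.2.2.1 b q, tensorE]
  split_ifs with hqp hφ
  · subst hqp
    have hε : C.eps q b = C.eps q (Ψ b).1 := by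
      rw [hΨ.2.2.1 b q, if_pos rfl, max_eq_left]
      linarith [C.phi_eq q (Ψ b).1]
    rw [Option.isSome_map]
    exact hfst (hε ▸ hb)
  · rfl
  · rw [Option.isSome_map]
    exact hfst (by rwa [hΨ.2.2.1 b q, if_neg hqp] at hb)

end StrictEmb

namespace AffCrystal

variable {l : ℕ} {C : AffCrystal l} {binf : C.B} {Ψ : Fin l → C.B → C.B × ℤ}

lemma height_nonneg (h1 : ∀ b q, C.wt b q ≤ 0) (b : C.B) : 0 ≤ C.height b := by
  simpa [height] using Finset.sum_nonpos fun q _ => h1 b q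

lemma height_pos_of_ne (h1 : ∀ b q, C.wt b q ≤ 0) (h2 : ∀ b, (∀ q, C.wt b q = 0) → b = binf)
    {b : C.B} (hb : b ≠ binf) : 0 < C.height b := by
  refine (height_nonneg h1 b).lt_of_ne fun h0 => hb (h2 b fun q => ?_)
  have hsum : ∑ r, C.wt b r = 0 := by simp only [height] at h0; linarith
  exact (Finset.sum_eq_zero_iff_of_nonpos fun r _ => h1 b r).mp hsum q (Finset.mem_univ q)

lemma exists_height_fst_lt (h1 : ∀ b q, C.wt b q ≤ 0) (h5 : ∀ p, StrictEmb l C p (Ψ p))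
    (h7 : ∀ b, b ≠ binf → ∃ p, (Ψ p b).2 < 0) {b : C.B} (hb : b ≠ binf) :
    ∃ p, (Ψ p b).2 < 0 ∧ (C.height (Ψ p b).1).toNat < (C.height b).toNat := by
  obtain ⟨p, hp⟩ := h7 b hb
  have := (h5 p).height_fst b
  have := height_nonneg h1 (Ψ p b).1
  exact ⟨p, hp, by omega⟩

theorem isSome_e_of_eps_pos (h1 : ∀ b q, C.wt b q ≤ 0) (h3 : ∀ p, C.eps p binf = 0)
    (h5 : ∀ p, StrictEmb l C p (Ψ p)) (h7 : ∀ b, b ≠ binf → ∃ p, (Ψ p b).2 < 0)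
    (b : C.B) {q : Fin l} (hq : 0 < C.eps q b) : (C.e q b).isSome := by
  by_cases hb : b = binf
  · rw [hb, h3 q] at hq
    exact absurd hq (lt_irrefl 0)
  obtain ⟨p, -, hlt⟩ := exists_height_fst_lt h1 h5 h7 hb
  exact (h5 p).isSome_e_of_fst hq fun h => isSome_e_of_eps_pos h1 h3 h5 h7 (Ψ p b).1 h
termination_by (C.height b).toNat

theorem exists_eps_pos_of_ne (h1 : ∀ b q, C.wt b q ≤ 0) (hwt0 : ∀ q, C.wt binf q = 0)
    (h3 : ∀ p, C.eps p binf = 0) (h5 : ∀ p, StrictEmb l C p (Ψ p))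
    (h7 : ∀ b, b ≠ binf → ∃ p, (Ψ p b).2 < 0) {b : C.B} (hb : b ≠ binf) :
    ∃ q, 0 < C.eps q b := by
  obtain ⟨p, hp, hlt⟩ := exists_height_fst_lt h1 h5 h7 hb
  by_cases hfst : (Ψ p b).1 = binf
  · refine ⟨p, lt_of_lt_of_le ?_ ((h5 p).neg_snd_sub_le_eps b)⟩
    simp only [hfst, hwt0, mul_zero, Finset.sum_const_zero, sub_zero]
    exact neg_pos.mpr hp
  · obtain ⟨q, hq⟩ := exists_eps_pos_of_ne h1 hwt0 h3 h5 h7 hfst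
    exact ⟨q, hq.trans_le ((h5 p).eps_fst_le b q)⟩
termination_by (C.height b).toNat

theorem exists_foldl_f_eq_some (h1 : ∀ b q, C.wt b q ≤ 0) (hwt0 : ∀ q, C.wt binf q = 0)
    (h2 : ∀ b, (∀ q, C.wt b q = 0) → b = binf) (h3 : ∀ p, C.eps p binf = 0)
    (h5 : ∀ p, StrictEmb l C p (Ψ p)) (h7 : ∀ b, b ≠ binf → ∃ p, (Ψ p b).2 < 0) (b : C.B) :
    ∃ L : List (Fin l), L.foldl (fun ob q => ob.bind (C.f q)) (some binf) = some b := by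
  by_cases hb : b = binf
  · exact ⟨[], by rw [hb, List.foldl_nil]⟩
  obtain ⟨q, hq⟩ := exists_eps_pos_of_ne h1 hwt0 h3 h5 h7 hb
  obtain ⟨c, hc⟩ := Option.isSome_iff_exists.mp (isSome_e_of_eps_pos h1 h3 h5 h7 b hq)
  have hheight := height_of_e_eq_some hc
  have := height_pos_of_ne h1 h2 hb
  obtain ⟨L, hL⟩ := exists_foldl_f_eq_some h1 hwt0 h2 h3 h5 h7 c
  refine ⟨L ++ [q], ?_⟩
  rw [List.foldl_append, hL, List.foldl_cons, List.foldl_nil, Option.bind_some, ← C.e_f, hc]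
termination_by (C.height b).toNat
decreasing_by omega

end AffCrystal

theorem stmt17_general (l : ℕ) (C : AffCrystal l) (binf : C.B)
    (h1 : ∀ b q, C.wt b q ≤ 0)
    (hwt0 : ∀ q, C.wt binf q = 0)
    (h2 : ∀ b, (∀ q, C.wt b q = 0) → b = binf)
    (h3 : ∀ p, C.eps p binf = 0)
    (Ψ : Fin l → C.B → C.B × ℤ)
    (h5 : ∀ p, StrictEmb l C p (Ψ p))
    (h7 : ∀ b, b ≠ binf → ∃ p, (Ψ p b).2 < 0) :
    ∀ b : C.B, ∃ L : List (Fin l),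
      L.foldl (fun ob q => ob.bind (C.f q)) (some binf) = some b :=
  AffCrystal.exists_foldl_f_eq_some h1 hwt0 h2 h3 h5 h7

/-- Kashiwara–Saito-type hypotheses imply connectedness of the crystal graph:
every element is reached from the weight-zero element b_∞ by lowering operators. -/
theorem stmt17 (l : ℕ) (hl : 3 ≤ l) (C : AffCrystal l) (binf : C.B)
    (h1 : ∀ b q, C.wt b q ≤ 0)
    (hwt0 : ∀ q, C.wt binf q = 0)
    (h2 : ∀ b, (∀ q, C.wt b q = 0) → b = binf)
    (h3 : ∀ p, C.eps p binf = 0)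
    (Ψ : Fin l → C.B → C.B × ℤ)
    (h5 : ∀ p, StrictEmb l C p (Ψ p))
    (h6 : ∀ p b, (Ψ p b).2 ≤ 0)
    (h7 : ∀ b, b ≠ binf → ∃ p, (Ψ p b).2 < 0) :
    ∀ b : C.B, ∃ L : List (Fin l),
      L.foldl (fun ob q => ob.bind (C.f q)) (some binf) = some b :=
  stmt17_general l C binf h1 hwt0 h2 h3 Ψ h5 h7
end
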